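/- arXiv:1810.11797 — 5 statements merged into one kernel-verified Lean document; each statement's English description precedes it below -/
import Mathlib

section
/- Let n be an odd natural number with n ≥ 1, let m ≥ 1, let δ ∈ {1, −1} ⊆ ℂ, and let B be a polynomial over ℂ satisfying B ∘ (δ • T m) = (δ • T m) ∘ (T n). Then B = T n. -/
open Polynomial Polynomial.Chebyshev

/-!
For odd `n` the Chebyshev polynomial `T n` is odd, so it commutes with `δ • X` for `δ = ±1`;
together with `T n ∘ T m = T (n * m) = T m ∘ T n` this shows that `T n` itself satisfies
`T n ∘ (δ • T m) = (δ • T m) ∘ T n`. Over a domain, composition on the right with a nonconstant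
polynomial is injective, so `B = T n`.
-/

namespace Polynomial

theorem comp_left_injective_of_natDegree_ne_zero {R : Type*} [Ring R] [NoZeroDivisors R]
    {q : R[X]} (hq : q.natDegree ≠ 0) : Function.Injective fun p : R[X] ↦ p.comp q := by
  intro p r hpr
  have hsub : (p - r).comp q = 0 := by simpa only [sub_comp, sub_eq_zero] using hpr
  obtain hpr | ⟨-, hconst⟩ := comp_eq_zero_iff.mp hsub
  · exact sub_eq_zero.mp hpr
  · exact absurd (by rw [hconst, natDegree_C]) hq

namespace Chebyshev

variable {R : Type*} [CommRing R]

theorem T_comp_neg_X (n : ℤ) : (T R n).comp (-X) = (n.negOnePow : R[X]) * T R n := by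
  rw [comp, eval₂_eq_eval_map, map_T, T_eval_neg, ← map_T Polynomial.C, eval_map, eval₂_C_X]

theorem T_comp_C_mul_X_of_odd {n : ℤ} (hn : Odd n) {δ : R} (hδ : δ = 1 ∨ δ = -1) :
    (T R n).comp (Polynomial.C δ * X) = Polynomial.C δ * T R n := by
  rcases hδ with rfl | rfl
  · simp
  · simp [T_comp_neg_X, Int.negOnePow_odd n hn]

theorem T_comp_C_mul_T_of_odd {n : ℤ} (hn : Odd n) {δ : R} (hδ : δ = 1 ∨ δ = -1) (m : ℤ) :
    (T R n).comp (Polynomial.C δ * T R m) = (Polynomial.C δ * T R m).comp (T R n) := by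
  calc (T R n).comp (Polynomial.C δ * T R m)
      = ((T R n).comp (Polynomial.C δ * X)).comp (T R m) := by simp [comp_assoc]
    _ = Polynomial.C δ * T R (n * m) := by rw [T_comp_C_mul_X_of_odd hn hδ, T_mul]; simp
    _ = (Polynomial.C δ * T R m).comp (T R n) := by rw [mul_comm n m, T_mul]; simp

end Chebyshev

end Polynomial

theorem semiconjugate_to_chebyshev_of_odd_general
    (n m : ℕ) (hn : Odd n) (hm : 1 ≤ m)
    (δ : ℂ) (hδ : δ ∈ ({1, -1} : Set ℂ))
    (B : Polynomial ℂ)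
    (h : B.comp (C δ * T ℂ m) = (C δ * T ℂ m).comp (T ℂ n)) :
    B = T ℂ n := by
  have hδ' : δ = 1 ∨ δ = -1 := hδ
  have hδ0 : δ ≠ 0 := by rcases hδ' with rfl | rfl <;> norm_num
  have hdeg : (C δ * T ℂ m).natDegree ≠ 0 := by
    rw [natDegree_C_mul hδ0, natDegree_T]
    omega
  exact comp_left_injective_of_natDegree_ne_zero hdeg
    (h.trans (T_comp_C_mul_T_of_odd hn.natCast hδ' m).symm)

/-- For odd `n`, the only polynomial `B` to which `±T_m` semiconjugates `T_n`
is `T_n` itself. -/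
theorem semiconjugate_to_chebyshev_of_odd
    (n m : ℕ) (hn : Odd n) (hn1 : 1 ≤ n) (hm : 1 ≤ m)
    (δ : ℂ) (hδ : δ ∈ ({1, -1} : Set ℂ))
    (B : Polynomial ℂ)
    (h : B.comp (C δ * T ℂ m) = (C δ * T ℂ m).comp (T ℂ n)) :
    B = T ℂ n :=
  semiconjugate_to_chebyshev_of_odd_general n m hn hm δ hδ B h
end

section
/- Let n be an odd natural number with n ≥ 1, let m ≥ 1 and k ≥ 1, let δ, δ′ ∈ {1, −1} ⊆ ℂ, and let B be a polynomial over ℂ such that B ∘ (δ • T m) = (δ • T m) ∘ (−T n) and (−T n) ∘ (δ′ • T k) = (δ′ • T k) ∘ B. Then B = −T n. In other words, if B and −T_n are mutually semiconjugate via signed Chebyshev polynomials and n is odd, then B = −T_n. -/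
/-!
Since `T_m ∘ T_n = T_{mn} = T_n ∘ T_m` and `T_n` is odd for odd `n`, the signed Chebyshev
polynomial `δ T_m` semiconjugates `-T_n` to `(-1)^m T_n`. Composition on the right with a
nonconstant polynomial is injective, so the first relation forces `B = (-1)^m T_n`. For odd `m`
this is the claim; for even `m` the second relation, evaluated at `1`, would give `-δ' = δ'`.
-/

open Polynomial Polynomial.Chebyshev

theorem Polynomial.comp_right_cancel {R : Type*} [CommRing R] [IsDomain R] {p q r : R[X]}
    (hr : r.natDegree ≠ 0) (h : p.comp r = q.comp r) : p = q := by
  have : (p - q).comp r = 0 := by rw [sub_comp, h, sub_self]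
  rcases comp_eq_zero_iff.mp this with hpq | ⟨-, hr_const⟩
  · exact sub_eq_zero.mp hpq
  · exact absurd (hr_const ▸ natDegree_C _) hr

namespace Polynomial.Chebyshev

variable {R : Type*} [CommRing R]

theorem T_comp_neg (n : ℤ) (p : R[X]) :
    (T R n).comp (-p) = Polynomial.C (n.negOnePow : R) * (T R n).comp p := by
  induction n using Chebyshev.induct' with
  | zero => simp
  | one => simp
  | add_two n ih1 ih2 =>
    have h1 : ((n : ℤ) + 1).negOnePow = -(n : ℤ).negOnePow := Int.negOnePow_succ _
    have h2 : ((n : ℤ) + 2).negOnePow = (n : ℤ).negOnePow := by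
      rw [Int.negOnePow_add, Int.negOnePow_even 2 even_two, mul_one]
    simp only [T_add_two, sub_comp, mul_comp, ofNat_comp, X_comp, ih1, ih2, h1, h2, Units.val_neg,
      Int.cast_neg, map_neg]
    ring
  | neg n ih => simp [ih]

theorem T_comp_C_mul_of_odd {n : ℤ} (hn : Odd n) {δ : R} (hδ : δ = 1 ∨ δ = -1) (p : R[X]) :
    (T R n).comp (Polynomial.C δ * p) = Polynomial.C δ * (T R n).comp p := by
  rcases hδ with rfl | rfl
  · simp
  · simp [T_comp_neg, Int.negOnePow_odd _ hn]

theorem T_comp_T_comm (m n : ℤ) : (T R m).comp (T R n) = (T R n).comp (T R m) := by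
  rw [← T_mul, ← T_mul, mul_comm]

theorem C_mul_T_comp_neg_T {m n : ℤ} (hn : Odd n) {δ : R} (hδ : δ = 1 ∨ δ = -1) :
    (Polynomial.C δ * T R m).comp (-T R n) =
      (Polynomial.C (m.negOnePow : R) * T R n).comp (Polynomial.C δ * T R m) := by
  rw [mul_comp, C_comp, T_comp_neg, mul_comp, C_comp, T_comp_C_mul_of_odd hn hδ, T_comp_T_comm]
  ring

theorem neg_T_comp_C_mul_T_ne_C_mul_T_comp_T [NeZero (2 : R)] {n : ℤ} (hn : Odd n) (k : ℤ)
    {δ : R} (hδ : δ = 1 ∨ δ = -1) :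
    (-T R n).comp (Polynomial.C δ * T R k) ≠ (Polynomial.C δ * T R k).comp (T R n) := by
  intro h
  have h_at_one := congrArg (eval 1) h
  have hT_δ : (T R n).eval δ = δ := by
    simpa using congrArg (eval 1) (T_comp_C_mul_of_odd hn hδ (1 : R[X]))
  simp only [eval_comp, eval_neg, eval_mul, eval_C, T_eval_one, mul_one, hT_δ] at h_at_one
  have h_two_mul : (2 : R) * δ = 0 := by linear_combination -h_at_one
  rcases hδ with rfl | rfl <;> simp [NeZero.ne] at h_two_mul

theorem natDegree_C_mul_T [IsDomain R] [NeZero (2 : R)] {δ : R} (hδ : δ ≠ 0) (m : ℤ) :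
    (Polynomial.C δ * T R m).natDegree = m.natAbs := by
  rw [natDegree_C_mul hδ, natDegree_T]

end Polynomial.Chebyshev

theorem mutually_semiconjugate_to_neg_chebyshev_of_odd_general
    (n m k : ℕ) (hn : Odd n) (hm : 1 ≤ m)
    (δ δ' : ℂ) (hδ : δ ∈ ({1, -1} : Set ℂ)) (hδ' : δ' ∈ ({1, -1} : Set ℂ))
    (B : Polynomial ℂ)
    (h₁ : B.comp (C δ * T ℂ m) = (C δ * T ℂ m).comp (-(T ℂ n)))
    (h₂ : (-(T ℂ n)).comp (C δ' * T ℂ k) = (C δ' * T ℂ k).comp B) :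
    B = -(T ℂ n) := by
  have hn' : Odd (n : ℤ) := hn.natCast
  have hδ_ne : δ ≠ 0 := by rcases hδ with rfl | rfl <;> norm_num
  have hB : B = C ((m : ℤ).negOnePow : ℂ) * T ℂ n :=
    comp_right_cancel (by rw [natDegree_C_mul_T hδ_ne]; omega)
      (h₁.trans (C_mul_T_comp_neg_T hn' hδ))
  rcases Nat.even_or_odd m with hm_even | hm_odd
  · refine absurd ?_ (neg_T_comp_C_mul_T_ne_C_mul_T_comp_T hn' k hδ')
    simpa [hB, Int.negOnePow_even _ hm_even.natCast] using h₂
  · simp [hB, Int.negOnePow_odd _ hm_odd.natCast]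

/-- For odd `n`, if `B` and `−T_n` are mutually semiconjugate via signed
Chebyshev polynomials, then `B = −T_n`. -/
theorem mutually_semiconjugate_to_neg_chebyshev_of_odd
    (n m k : ℕ) (hn : Odd n) (hn1 : 1 ≤ n) (hm : 1 ≤ m) (hk : 1 ≤ k)
    (δ δ' : ℂ) (hδ : δ ∈ ({1, -1} : Set ℂ)) (hδ' : δ' ∈ ({1, -1} : Set ℂ))
    (B : Polynomial ℂ)
    (h₁ : B.comp (C δ * T ℂ m) = (C δ * T ℂ m).comp (-(T ℂ n)))
    (h₂ : (-(T ℂ n)).comp (C δ' * T ℂ k) = (C δ' * T ℂ k).comp B) :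
    B = -(T ℂ n) :=
  mutually_semiconjugate_to_neg_chebyshev_of_odd_general n m k hn hm δ δ' hδ hδ' B h₁ h₂
end

section
/- Let a, b ∈ ℂ with a ≠ 0 and b ≠ 0, let n, m ∈ ℤ with m ≠ 0, and let B : ℂ → ℂ satisfy B (b * z ^ m) = b * (a * z ^ n) ^ m for all z ≠ 0 (integer powers zpow). Then B w = a ^ m * b ^ (1 - n) * w ^ n for all w ≠ 0. -/
theorem IsAlgClosed.exists_zpow_eq {k : Type*} [Field k] [IsAlgClosed k] (x : k) {m : ℤ}
    (hm : m ≠ 0) : ∃ z : k, z ^ m = x := by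
  have hpos : 0 < m.natAbs := Int.natAbs_pos.mpr hm
  rcases Int.natAbs_eq m with hm' | hm'
  · obtain ⟨z, hz⟩ := exists_pow_nat_eq x hpos
    exact ⟨z, by rw [hm', zpow_natCast, hz]⟩
  · obtain ⟨z, hz⟩ := exists_pow_nat_eq x⁻¹ hpos
    exact ⟨z, by rw [hm', zpow_neg, zpow_natCast, hz, inv_inv]⟩

theorem mul_mul_zpow_zpow_eq {K : Type*} [Field K] {b : K} (hb : b ≠ 0) (a z : K) (n m : ℤ) :
    b * (a * z ^ n) ^ m = a ^ m * b ^ (1 - n) * (b * z ^ m) ^ n := by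
  rw [mul_zpow, mul_zpow, ← zpow_mul, ← zpow_mul, mul_comm n m, zpow_sub₀ hb, zpow_one]
  field_simp

theorem semiconjugate_to_power_map_general
    (a b : ℂ) (hb : b ≠ 0)
    (n m : ℤ) (hm : m ≠ 0)
    (B : ℂ → ℂ)
    (h : ∀ z : ℂ, z ≠ 0 → B (b * z ^ m) = b * (a * z ^ n) ^ m) :
    ∀ w : ℂ, w ≠ 0 → B w = a ^ m * b ^ (1 - n) * w ^ n := by
  intro w hw
  obtain ⟨z, hz⟩ := IsAlgClosed.exists_zpow_eq (w / b) hm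
  have hw_eq : b * z ^ m = w := by rw [hz, mul_div_cancel₀ w hb]
  have hz0 : z ≠ 0 := by
    rintro rfl
    exact div_ne_zero hw hb (by rw [← hz, zero_zpow m hm])
  rw [← hw_eq, h z hz0, mul_mul_zpow_zpow_eq hb]

/-- A map semiconjugate to the power map `z ↦ a z^n` via the power map
`z ↦ b z^m` is the explicit power map `w ↦ a^m b^{1−n} w^n` on `ℂ \ {0}`. -/
theorem semiconjugate_to_power_map
    (a b : ℂ) (ha : a ≠ 0) (hb : b ≠ 0)
    (n m : ℤ) (hm : m ≠ 0)
    (B : ℂ → ℂ)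
    (h : ∀ z : ℂ, z ≠ 0 → B (b * z ^ m) = b * (a * z ^ n) ^ m) :
    ∀ w : ℂ, w ≠ 0 → B w = a ^ m * b ^ (1 - n) * w ^ n :=
  semiconjugate_to_power_map_general a b hb n m hm B h
end

section
/- Let a, b ∈ ℂ with a ≠ 0 and b ≠ 0, let n, m ∈ ℤ with m ≠ 0 and |n| ≥ 2, and let B : ℂ → ℂ satisfy B (b * z ^ m) = b * (a * z ^ n) ^ m for all z ≠ 0 (integer powers zpow). Then B is conjugate to the map z ↦ a * z ^ n by a linear map: there exists c ∈ ℂ, c ≠ 0, such that B (c * z) = c * (a * z ^ n) for all z ≠ 0. -/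
/-!
Choose `d` with `d ^ (n - 1) = a ^ (1 - m)` and put `c = b d`. Every `c z` with `z ≠ 0` is of the
form `b w ^ m` with `w ^ m = d z`, and then the semiconjugacy gives
`B (c z) = b a ^ m (d z) ^ n = b d (a ^ m d ^ (n - 1)) z ^ n = c a z ^ n`.
-/

lemma Complex.exists_ne_zero_zpow_eq {k : ℤ} (hk : k ≠ 0) {w : ℂ} (hw : w ≠ 0) :
    ∃ c : ℂ, c ≠ 0 ∧ c ^ k = w := by
  refine ⟨exp (log w / k), exp_ne_zero _, ?_⟩
  rw [← exp_int_mul, mul_div_cancel₀ _ (Int.cast_ne_zero.mpr hk), exp_log hw]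

lemma mul_zpow_zpow_eq_of_zpow_sub_one_eq {G : Type*} [CommGroupWithZero G] {a d w z : G}
    {n m : ℤ} (ha : a ≠ 0) (hd : d ≠ 0) (hd_pow : d ^ (n - 1) = a ^ (1 - m))
    (hw : w ^ m = d * z) :
    (a * w ^ n) ^ m = d * (a * z ^ n) :=
  calc (a * w ^ n) ^ m
      = a ^ m * (w ^ m) ^ n := by rw [mul_zpow, ← zpow_mul, ← zpow_mul, mul_comm n m]
    _ = a ^ m * (d ^ (n - 1) * d) * z ^ n := by
        rw [hw, mul_zpow, ← zpow_add_one₀ hd, sub_add_cancel, mul_assoc]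
    _ = d * (a * z ^ n) := by
        rw [hd_pow, ← mul_assoc, ← zpow_add₀ ha, add_sub_cancel, zpow_one,
          mul_assoc, mul_left_comm]

/-- A map semiconjugate to the power map `z ↦ a z^n` via the power map
`z ↦ b z^m` is linearly conjugate to `z ↦ a z^n` on `ℂ \ {0}`. -/
theorem semiconjugate_to_power_map_conjugate
    (a b : ℂ) (ha : a ≠ 0) (hb : b ≠ 0)
    (n m : ℤ) (hm : m ≠ 0) (hn : 2 ≤ |n|)
    (B : ℂ → ℂ)
    (h : ∀ z : ℂ, z ≠ 0 → B (b * z ^ m) = b * (a * z ^ n) ^ m) :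
    ∃ c : ℂ, c ≠ 0 ∧ ∀ z : ℂ, z ≠ 0 → B (c * z) = c * (a * z ^ n) := by
  have hn₁ : n - 1 ≠ 0 := by cases abs_cases n <;> omega
  obtain ⟨d, hd, hd_pow⟩ := Complex.exists_ne_zero_zpow_eq hn₁ (zpow_ne_zero (1 - m) ha)
  refine ⟨b * d, mul_ne_zero hb hd, fun z hz => ?_⟩
  obtain ⟨w, hw, hw_pow⟩ := Complex.exists_ne_zero_zpow_eq hm (mul_ne_zero hd hz)
  rw [mul_assoc, ← hw_pow, h w hw, mul_zpow_zpow_eq_of_zpow_sub_one_eq ha hd hd_pow hw_pow,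
    ← mul_assoc]
end

section
/- Let n be an odd natural number with n ≥ 1. Then the Chebyshev polynomial T n and its negative −T n are not conjugate by any affine map: there do not exist c, d ∈ ℂ with c ≠ 0 such that (C c * X + C d) ∘ (T n) = (−T n) ∘ (C c * X + C d) as polynomials over ℂ. -/
/-!
Write `P = T n`; it is an odd polynomial. If `d = 0`, the coefficient of `X` in
`c P = -P ∘ (c X)` gives `2 c P'(0) = 0`, whereas `P'(0) = n U_{n-1}(0) = ±n`.
If `d ≠ 0`, adding the conjugacy equation at `z` and `-z` and using oddness gives
`P (w + 2d) = P w - 2d`, so `P + X` is a periodic polynomial, hence constant, hence `P = -X`,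
contradicting `P 1 = 1`.
-/

open Polynomial Polynomial.Chebyshev

namespace Polynomial

theorem eq_C_eval_zero_of_eval_add_eq {R : Type*} [CommRing R] [IsDomain R] [CharZero R]
    {p : R[X]} {a : R} (ha : a ≠ 0) (h : ∀ x, p.eval (x + a) = p.eval x) :
    p = C (p.eval 0) := by
  have hmul : ∀ k : ℕ, p.eval (k * a) = p.eval 0 := by
    intro k
    induction k with
    | zero => simp
    | succ k ih => rw [Nat.cast_succ, add_one_mul, h, ih]
  refine p.eq_of_infinite_eval_eq _ (Set.infinite_of_injective_forall_mem (f := fun k : ℕ ↦ k * a)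
    (fun k l hkl ↦ by exact_mod_cast mul_right_cancel₀ ha hkl) fun k ↦ ?_)
  simp [hmul]

theorem coeff_one_eq_zero_of_C_mul_eq_neg_comp {R : Type*} [CommRing R] [IsDomain R]
    [NeZero (2 : R)] {p : R[X]} {c : R} (hc : c ≠ 0) (h : C c * p = -p.comp (C c * X)) :
    p.coeff 1 = 0 := by
  have h1 := congrArg (coeff · 1) h
  simp only [coeff_C_mul, coeff_neg, comp_C_mul_X_coeff, pow_one] at h1
  have : (2 * c) * p.coeff 1 = 0 := by linear_combination h1
  exact (mul_eq_zero.mp this).resolve_left (mul_ne_zero two_ne_zero hc)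

theorem eval_add_two_mul_eq_of_affine_conj_neg {K : Type*} [Field K] {p : K[X]} {c d : K}
    (hc : c ≠ 0) (hodd : ∀ x, p.eval (-x) = -p.eval x)
    (h : ∀ z, c * p.eval z + d = -p.eval (c * z + d)) (w : K) :
    p.eval (w + 2 * d) = p.eval w - 2 * d := by
  have hz : c * ((w + d) / c) = w + d := mul_div_cancel₀ _ hc
  have h₁ := h ((w + d) / c)
  have h₂ := h (-((w + d) / c))
  rw [hz, add_assoc, ← two_mul] at h₁
  rw [mul_neg, hz, neg_add_rev, neg_add_cancel_comm, hodd, hodd, neg_neg] at h₂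
  linear_combination h₁ + h₂

end Polynomial

namespace Polynomial.Chebyshev

theorem T_coeff_one_of_odd {R : Type*} [CommRing R] {n : ℤ} (hn : Odd n) :
    (T R n).coeff 1 = n * ((n - 1) / 2).negOnePow := by
  have := congrArg (eval 0) (T_derivative_eq_U (R := R) n)
  rw [← coeff_zero_eq_eval_zero, coeff_derivative, eval_mul,
    U_eval_zero_of_even R (by simpa using hn.sub_odd odd_one)] at this
  simpa using this

theorem T_coeff_one_ne_zero_of_odd {R : Type*} [CommRing R] [CharZero R] {n : ℤ} (hn : Odd n) :
    (T R n).coeff 1 ≠ 0 := by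
  have hn0 : n ≠ 0 := by rintro rfl; simp at hn
  rw [T_coeff_one_of_odd hn]
  exact_mod_cast mul_ne_zero hn0 (Units.ne_zero _)

end Polynomial.Chebyshev

theorem chebyshev_neg_chebyshev_not_conjugate_of_odd_general
    (n : ℕ) (hn : Odd n) :
    ¬ ∃ c d : ℂ, c ≠ 0 ∧
      (C c * X + C d).comp (T ℂ n) = (-(T ℂ n)).comp (C c * X + C d) := by
  rintro ⟨c, d, hc, h⟩
  have hn' : Odd (n : ℤ) := by exact_mod_cast hn
  rcases eq_or_ne d 0 with rfl | hd
  · refine T_coeff_one_ne_zero_of_odd hn' (coeff_one_eq_zero_of_C_mul_eq_neg_comp hc ?_)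
    simpa [mul_comp, neg_comp] using h
  have hconj : ∀ z, c * (T ℂ n).eval z + d = -(T ℂ n).eval (c * z + d) := fun z ↦ by
    simpa [eval_comp] using congrArg (eval z) h
  have hT_odd : ∀ x, (T ℂ n).eval (-x) = -(T ℂ n).eval x := fun x ↦ by
    simp [T_eval_neg, hn.neg_one_pow]
  have hperiodic : ∀ x, (T ℂ n + X).eval (x + 2 * d) = (T ℂ n + X).eval x := fun x ↦ by
    simp only [eval_add, eval_X, eval_add_two_mul_eq_of_affine_conj_neg hc hT_odd hconj]
    ring
  have hT : T ℂ n + X = 0 := by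
    simpa [T_eval_zero_of_odd ℂ hn'] using
      eq_C_eval_zero_of_eval_add_eq (mul_ne_zero two_ne_zero hd) hperiodic
  simpa [T_eval_one] using congrArg (eval 1) hT

/-- For odd `n`, the Chebyshev polynomial `T n` and `−T n` are not conjugate
by any affine map. -/
theorem chebyshev_neg_chebyshev_not_conjugate_of_odd
    (n : ℕ) (hn : Odd n) (hn1 : 1 ≤ n) :
    ¬ ∃ c d : ℂ, c ≠ 0 ∧
      (C c * X + C d).comp (T ℂ n) = (-(T ℂ n)).comp (C c * X + C d) :=
  chebyshev_neg_chebyshev_not_conjugate_of_odd_general n hn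
end
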